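/- arXiv:1803.02431 — 2 statements merged into one kernel-verified Lean document; each statement's English description precedes it below -/
import Mathlib

section
/- Let g ∈ C¹(ℝ) satisfy g(0) = 0, g'(0) = 0, and the Hölder-type bound |g'(t)| ≤ C|t|^α for all t ∈ [-1,1], where C > 0 and α ∈ (0,1]. Let Ω = {(s,t) ∈ ℝ² : s > g(t)}. Then there exists r₀ > 0, depending only on C and α, such that for every r ∈ (0, r₀] and every point E = (s*, 0) with s* ∈ [0, r), the set B_r(E) ∩ Ω is connected. -/
open Set Metric

/-!
`B_r(E) ∩ Ω` is star-shaped with respect to `c = (s + r/2, 0)`. Points of the ball have `|t| < r`,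
and on `[-|t|, |t|]` the Hölder bound makes `g` Lipschitz with constant `C |t|^α ≤ 1/4`. So at
height `b t` the graph of `g` exceeds the chord from `(0, 0)` to `(g t, t)` by at most
`(1 - b) r/2`, while the segment from `c` to a point `(p₀, t)` of `Ω` lies beyond that chord by
more than this margin.
-/

lemma abs_sub_le_of_abs_deriv_le_rpow {g : ℝ → ℝ} {C α ρ u v : ℝ} (hg : Differentiable ℝ g)
    (hC : 0 ≤ C) (hα : 0 ≤ α) (hρ : ρ ≤ 1)
    (hHold : ∀ t ∈ Icc (-1 : ℝ) 1, |deriv g t| ≤ C * |t| ^ α)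
    (hu : u ∈ Icc (-ρ) ρ) (hv : v ∈ Icc (-ρ) ρ) : |g u - g v| ≤ C * ρ ^ α * |u - v| := by
  refine (convex_Icc (-ρ) ρ).norm_image_sub_le_of_norm_deriv_le (fun x _ ↦ hg x) (fun x hx ↦ ?_)
    hv hu
  have hxρ : |x| ≤ ρ := abs_le.mpr hx
  calc |deriv g x| ≤ C * |x| ^ α :=
        hHold x ⟨by linarith [neg_abs_le x], by linarith [le_abs_self x]⟩
    _ ≤ C * ρ ^ α := by gcongr

lemma apply_mul_le_of_abs_sub_le {g : ℝ → ℝ} {K t b : ℝ} (hg0 : g 0 = 0)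
    (hslope : ∀ u ∈ Icc (-|t|) |t|, ∀ v ∈ Icc (-|t|) |t|, |g u - g v| ≤ K * |u - v|)
    (hb : b ∈ Icc (0 : ℝ) 1) : g (b * t) ≤ b * g t + (1 - b) * (2 * K * |t|) := by
  obtain ⟨hb0, hb1⟩ := hb
  have ht : t ∈ Icc (-|t|) |t| := abs_le.mp le_rfl
  have hbt : b * t ∈ Icc (-|t|) |t| := abs_le.mp <| by
    rw [abs_mul, abs_of_nonneg hb0]; exact mul_le_of_le_one_left (abs_nonneg t) hb1
  have h0 : (0 : ℝ) ∈ Icc (-|t|) |t| := abs_le.mp (by simp)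
  have hnear : g (b * t) - g t ≤ (1 - b) * (K * |t|) := by
    have := (le_abs_self _).trans (hslope _ hbt _ ht)
    rwa [show b * t - t = -((1 - b) * t) by ring, abs_neg, abs_mul, abs_of_nonneg (by linarith),
      mul_left_comm] at this
  have hfar : g t ≤ K * |t| := by
    simpa [hg0] using (le_abs_self _).trans (hslope _ ht _ h0)
  nlinarith

lemma apply_mul_le_of_abs_deriv_le_rpow {g : ℝ → ℝ} {C α r t b : ℝ} (hg : Differentiable ℝ g)
    (hg0 : g 0 = 0) (hC : 0 ≤ C) (hα : 0 ≤ α) (hr1 : r ≤ 1) (hCr : C * r ^ α ≤ 1 / 4)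
    (hHold : ∀ t ∈ Icc (-1 : ℝ) 1, |deriv g t| ≤ C * |t| ^ α) (ht : |t| < r)
    (hb : b ∈ Icc (0 : ℝ) 1) : g (b * t) ≤ b * g t + (1 - b) * (r / 2) := by
  have hslope := apply_mul_le_of_abs_sub_le hg0 (fun u hu v hv ↦
    abs_sub_le_of_abs_deriv_le_rpow hg hC hα (ht.le.trans hr1) hHold hu hv) hb
  have hK : 2 * (C * |t| ^ α) * |t| ≤ r / 2 := by
    have : C * |t| ^ α ≤ 1 / 4 := hCr.trans' (by gcongr)
    nlinarith [abs_nonneg t]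
  nlinarith [hb.1, hb.2]

lemma starConvex_epigraph_inter_strip {g : ℝ → ℝ} {ρ x₀ : ℝ} (hx₀ : g 0 < x₀)
    (hchord : ∀ t, |t| < ρ → ∀ b ∈ Icc (0 : ℝ) 1, g (b * t) ≤ b * g t + (1 - b) * x₀) :
    StarConvex ℝ ((WithLp.equiv 2 (Fin 2 → ℝ)).symm ![x₀, 0])
      {p : EuclideanSpace ℝ (Fin 2) | g (p 1) < p 0 ∧ |p 1| < ρ} := by
  rintro p ⟨hpΩ, hpρ⟩ a b ha hb hab
  obtain rfl : a = 1 - b := by linarith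
  have hb1 : b ≤ 1 := by linarith
  simp only [mem_ofPred_eq, PiLp.add_apply, PiLp.smul_apply, smul_eq_mul, WithLp.equiv_symm_apply,
    Matrix.cons_val_zero, Matrix.cons_val_one, mul_zero, zero_add]
  have hbρ : |b * p 1| < ρ := by
    rw [abs_mul, abs_of_nonneg hb]; exact (mul_le_of_le_one_left (abs_nonneg _) hb1).trans_lt hpρ
  refine ⟨?_, hbρ⟩
  rcases hb.eq_or_lt with rfl | hbpos
  · simpa using hx₀
  · linarith [hchord _ hpρ b ⟨hb, hb1⟩, mul_lt_mul_of_pos_left hpΩ hbpos]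

lemma isConnected_ball_inter_epigraph {g : ℝ → ℝ} {r s : ℝ} (hr : 0 < r)
    (hc : g 0 < s + r / 2)
    (hchord : ∀ t, |t| < r → ∀ b ∈ Icc (0 : ℝ) 1, g (b * t) ≤ b * g t + (1 - b) * (s + r / 2)) :
    IsConnected (ball ((WithLp.equiv 2 (Fin 2 → ℝ)).symm ![s, 0]) r ∩
      {p : EuclideanSpace ℝ (Fin 2) | g (p 1) < p 0}) := by
  set E : EuclideanSpace ℝ (Fin 2) := (WithLp.equiv 2 (Fin 2 → ℝ)).symm ![s, 0]
  set c : EuclideanSpace ℝ (Fin 2) := (WithLp.equiv 2 (Fin 2 → ℝ)).symm ![s + r / 2, 0]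
  have hcE : c ∈ ball E r := by
    have hdist : dist c E = r / 2 := by
      simpa [E, c, EuclideanSpace.dist_eq, abs_of_pos hr] using Real.sqrt_sq (half_pos hr).le
    rw [mem_ball, hdist]
    linarith
  have hstrip : ∀ p ∈ ball E r, |p 1| < r := fun p hp ↦ by
    simpa [E] using (PiLp.dist_apply_le p E 1).trans_lt hp
  have hS : ball E r ∩ {p : EuclideanSpace ℝ (Fin 2) | g (p 1) < p 0} =
      ball E r ∩ {p | g (p 1) < p 0 ∧ |p 1| < r} := by
    ext p
    exact ⟨fun ⟨hp, hpΩ⟩ ↦ ⟨hp, hpΩ, hstrip p hp⟩, fun ⟨hp, hpΩ, _⟩ ↦ ⟨hp, hpΩ⟩⟩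
  have hstar := ((convex_ball E r).starConvex hcE).inter (starConvex_epigraph_inter_strip hc hchord)
  rw [hS]
  exact (hstar.isPathConnected ⟨hcE, by simpa [c] using hc, hstrip c hcE⟩).isConnected

theorem ball_inter_epigraph_connected_general (C α : ℝ) (hC : 0 < C) (hα : α ∈ Set.Ioc (0 : ℝ) 1)
    (g : ℝ → ℝ) (hg : ContDiff ℝ 1 g) (hg0 : g 0 = 0)
    (hHold : ∀ t ∈ Set.Icc (-1 : ℝ) 1, |deriv g t| ≤ C * |t| ^ α) :
    ∃ r₀ > 0, ∀ r : ℝ, 0 < r → r ≤ r₀ → ∀ s : ℝ, 0 ≤ s → s < r →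
      IsConnected
        (Metric.ball ((WithLp.equiv 2 (Fin 2 → ℝ)).symm ![s, 0]) r ∩
          {p : EuclideanSpace ℝ (Fin 2) | g (p 1) < p 0}) := by
  refine ⟨min 1 ((4 * C)⁻¹ ^ α⁻¹), by positivity, fun r hr hr₀ s hs _ ↦ ?_⟩
  have hCr : C * r ^ α ≤ 1 / 4 := by
    have hrα := (Real.le_rpow_inv_iff_of_pos hr.le (by positivity) hα.1).1
      (hr₀.trans (min_le_right _ _))
    calc C * r ^ α ≤ C * (4 * C)⁻¹ := by gcongr
      _ = 1 / 4 := by field_simp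
  refine isConnected_ball_inter_epigraph hr (by rw [hg0]; positivity) fun t ht b hb ↦ ?_
  calc g (b * t) ≤ b * g t + (1 - b) * (r / 2) :=
        apply_mul_le_of_abs_deriv_le_rpow (hg.differentiable one_ne_zero) hg0 hC.le hα.1.le
          (hr₀.trans (min_le_left _ _)) hCr hHold ht hb
    _ ≤ b * g t + (1 - b) * (s + r / 2) := by gcongr <;> linarith [hb.2]

/-- Connectivity of small balls intersected with a domain above a C^{1,α} graph:
if `g ∈ C¹` with `g(0) = g'(0) = 0` and `|g'(t)| ≤ C|t|^α` on `[-1,1]`, then there is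
`r₀ > 0` (depending only on `C`, `α`) such that for every `r ∈ (0, r₀]` and every point
`E = (s*, 0)` with `s* ∈ [0, r)`, the set `B_r(E) ∩ {s > g(t)}` is connected. -/
theorem ball_inter_epigraph_connected (C α : ℝ) (hC : 0 < C) (hα : α ∈ Set.Ioc (0 : ℝ) 1)
    (g : ℝ → ℝ) (hg : ContDiff ℝ 1 g) (hg0 : g 0 = 0) (hg'0 : deriv g 0 = 0)
    (hHold : ∀ t ∈ Set.Icc (-1 : ℝ) 1, |deriv g t| ≤ C * |t| ^ α) :
    ∃ r₀ > 0, ∀ r : ℝ, 0 < r → r ≤ r₀ → ∀ s : ℝ, 0 ≤ s → s < r →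
      IsConnected
        (Metric.ball ((WithLp.equiv 2 (Fin 2 → ℝ)).symm ![s, 0]) r ∩
          {p : EuclideanSpace ℝ (Fin 2) | g (p 1) < p 0}) :=
  ball_inter_epigraph_connected_general C α hC hα g hg hg0 hHold
end

section
/- Let Ω ⊂ ℝ² be open, bounded, and connected, let w : Ω̄ → ℝ be continuous, and suppose w satisfies the strong minimum principle in Ω in the following form: w attains no local minimum relative to Ω̄ at any interior point of Ω unless w is constant. Assume w is not constant. Fix r > 0 and a starting point E₁ ∈ ∂Ω that is not a local minimum point of w relative to Ω̄. Define inductively G⁰ = E₁ and, given Gⁱ, let Gⁱ⁺¹ be a point where w attains its minimum over the compact set closure(B_r(Gⁱ) ∩ Ω); stop at step k₁ if w(G^{k₁+1}) = w(G^{k₁}), i.e., if the minimum over closure(B_r(G^{k₁}) ∩ Ω) is attained at G^{k₁} itself. Then: (a) k₁ ≥ 1 and w(Gⁱ⁺¹) < w(Gⁱ) for 0 ≤ i < k₁; (b) the process terminates after finitely many steps; (c) the terminal point G^{k₁} lies on ∂Ω and is a local minimum point of w relative to Ω̄ with w(G^{k₁}) < w(E₁). -/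
open Metric Set Filter


/-- Existence of minimal chains: for a continuous non-constant `w` on `Ω̄` satisfying the
strong minimum principle in `Ω`, starting from a boundary point `E₁` that is not a local
minimum of `w` relative to `Ω̄`, there is a finite chain `G⁰ = E₁, G¹, …, G^{k₁}` with
`Gⁱ⁺¹ ∈ closure(B_r(Gⁱ) ∩ Ω)` a minimum point of `w` over `closure(B_r(Gⁱ) ∩ Ω)`, strictly
decreasing values, whose terminal point lies on `∂Ω`, minimizes over its own ball, is a
local minimum of `w` relative to `Ω̄`, and has value below `w(E₁)`. -/
theorem minimal_chain_exists
    (Ω : Set (EuclideanSpace ℝ (Fin 2))) (hΩo : IsOpen Ω)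
    (hΩb : Bornology.IsBounded Ω) (hΩc : IsConnected Ω)
    (w : EuclideanSpace ℝ (Fin 2) → ℝ) (hw : ContinuousOn w (closure Ω))
    (hmp : ∀ x ∈ Ω, IsLocalMinOn w (closure Ω) x → ∃ c, ∀ y ∈ closure Ω, w y = c)
    (hnc : ¬∃ c, ∀ y ∈ closure Ω, w y = c)
    (r : ℝ) (hr : 0 < r)
    (E₁ : EuclideanSpace ℝ (Fin 2)) (hE₁ : E₁ ∈ frontier Ω)
    (hE₁min : ¬IsLocalMinOn w (closure Ω) E₁) :
    ∃ (k₁ : ℕ) (G : ℕ → EuclideanSpace ℝ (Fin 2)), 1 ≤ k₁ ∧ G 0 = E₁ ∧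
      (∀ i < k₁,
        G (i + 1) ∈ closure (Metric.ball (G i) r ∩ Ω) ∧
        (∀ y ∈ closure (Metric.ball (G i) r ∩ Ω), w (G (i + 1)) ≤ w y) ∧
        w (G (i + 1)) < w (G i)) ∧
      (∀ y ∈ closure (Metric.ball (G k₁) r ∩ Ω), w (G k₁) ≤ w y) ∧
      G k₁ ∈ frontier Ω ∧ IsLocalMinOn w (closure Ω) (G k₁) ∧ w (G k₁) < w E₁ := by
  classical
  -- Lemma A: points of `closure Ω` within distance `r` of `x` lie in `closure (ball x r ∩ Ω)`
  have lemA : ∀ x, ∀ y ∈ closure Ω, dist y x < r →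
      y ∈ closure (Metric.ball x r ∩ Ω) := by
    intro x y hy hd
    rw [_root_.mem_closure_iff]
    intro o ho hyo
    obtain ⟨z, hz⟩ := _root_.mem_closure_iff.mp hy (o ∩ Metric.ball x r)
      (ho.inter Metric.isOpen_ball) ⟨hyo, by simpa [Metric.mem_ball] using hd⟩
    exact ⟨z, hz.1.1, hz.1.2, hz.2⟩
  have lemSelf : ∀ x ∈ closure Ω, x ∈ closure (Metric.ball x r ∩ Ω) := by
    intro x hx
    exact lemA x x hx (by simpa using hr)
  have hcΩ : IsCompact (closure Ω) := hΩb.isCompact_closure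
  have hKsub : ∀ x : EuclideanSpace ℝ (Fin 2),
      closure (Metric.ball x r ∩ Ω) ⊆ closure Ω :=
    fun x => closure_mono inter_subset_right
  have hKcomp : ∀ x : EuclideanSpace ℝ (Fin 2),
      IsCompact (closure (Metric.ball x r ∩ Ω)) :=
    fun x => hcΩ.of_isClosed_subset isClosed_closure (hKsub x)
  have key : ∀ x ∈ closure Ω, ∃ z, z ∈ closure (Metric.ball x r ∩ Ω) ∧
      ∀ y ∈ closure (Metric.ball x r ∩ Ω), w z ≤ w y := by
    intro x hx
    obtain ⟨z, hz1, hz2⟩ := (hKcomp x).exists_isMinOn ⟨x, lemSelf x hx⟩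
      (hw.mono (hKsub x))
    exact ⟨z, hz1, fun y hy => hz2 hy⟩
  choose! next hnext1 hnext2 using key
  set G : ℕ → EuclideanSpace ℝ (Fin 2) := fun n => next^[n] E₁ with hGdef
  have hG0 : G 0 = E₁ := rfl
  have hGsucc : ∀ n, G (n + 1) = next (G n) := fun n =>
    Function.iterate_succ_apply' next n E₁
  have hE₁cl : E₁ ∈ closure Ω := frontier_subset_closure hE₁
  have hGcl : ∀ n, G n ∈ closure Ω := by
    intro n
    induction n with
    | zero => exact hE₁cl
    | succ n ih =>
      rw [hGsucc]
      exact hKsub _ (hnext1 _ ih)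
  have hGmem : ∀ n, G (n + 1) ∈ closure (Metric.ball (G n) r ∩ Ω) := by
    intro n; rw [hGsucc]; exact hnext1 _ (hGcl n)
  have hGmin : ∀ n, ∀ y ∈ closure (Metric.ball (G n) r ∩ Ω), w (G (n + 1)) ≤ w y := by
    intro n; rw [hGsucc]; exact hnext2 _ (hGcl n)
  have hdec : ∀ n, w (G (n + 1)) ≤ w (G n) :=
    fun n => hGmin n _ (lemSelf _ (hGcl n))
  -- termination
  have hterm : ∃ k, w (G (k + 1)) = w (G k) := by
    by_contra h
    push_neg at h
    have hstrict : ∀ n, w (G (n + 1)) < w (G n) := fun n => lt_of_le_of_ne (hdec n) (h n)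
    have hanti : StrictAnti (fun n => w (G n)) := strictAnti_nat_of_succ_lt hstrict
    have hsep : ∀ i j, i + 2 ≤ j → r ≤ dist (G j) (G i) := by
      intro i j hij
      by_contra hlt
      push_neg at hlt
      have hmem := lemA (G i) (G j) (hGcl j) hlt
      have h1 : w (G (i + 1)) ≤ w (G j) := hGmin i _ hmem
      have h2 : w (G j) < w (G (i + 1)) := hanti (by omega)
      exact absurd h1 (not_le.2 h2)
    obtain ⟨t, htf, hts⟩ := (Metric.totallyBounded_iff).mp hcΩ.totallyBounded (r / 2)
      (by positivity)
    have hmem : ∀ n : ℕ, ∃ y ∈ t, G (2 * n) ∈ Metric.ball y (r / 2) := by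
      intro n
      have := hts (hGcl (2 * n))
      simpa using this
    choose f hf hfb using hmem
    haveI : Finite t := htf.to_subtype
    obtain ⟨i, j, hne, heq⟩ :=
      Finite.exists_ne_map_eq_of_infinite (fun n : ℕ => (⟨f n, hf n⟩ : t))
    have hfeq : f i = f j := congrArg Subtype.val heq
    have hd : dist (G (2 * i)) (G (2 * j)) < r := by
      have h1 : dist (G (2 * i)) (f i) < r / 2 := Metric.mem_ball.mp (hfb i)
      have h2 : dist (G (2 * j)) (f j) < r / 2 := Metric.mem_ball.mp (hfb j)
      rw [hfeq] at h1
      rw [dist_comm] at h2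
      calc dist (G (2 * i)) (G (2 * j))
          ≤ dist (G (2 * i)) (f j) + dist (f j) (G (2 * j)) := dist_triangle _ _ _
        _ < r / 2 + r / 2 := add_lt_add h1 h2
        _ = r := by ring
    rcases hne.lt_or_gt with hij | hij
    · exact absurd hd (not_lt.2 (by rw [dist_comm]; exact hsep _ _ (by omega)))
    · exact absurd hd (not_lt.2 (hsep _ _ (by omega)))
  set k₁ := Nat.find hterm with hk₁def
  have hterm' : w (G (k₁ + 1)) = w (G k₁) := Nat.find_spec hterm
  have hstrict : ∀ i < k₁, w (G (i + 1)) < w (G i) := by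
    intro i hi
    exact lt_of_le_of_ne (hdec i) (Nat.find_min hterm hi)
  have hmono : Antitone (fun n => w (G n)) := antitone_nat_of_succ_le hdec
  -- terminal point minimizes over its own ball
  have hminK : ∀ y ∈ closure (Metric.ball (G k₁) r ∩ Ω), w (G k₁) ≤ w y := by
    intro y hy
    calc w (G k₁) = w (G (k₁ + 1)) := hterm'.symm
      _ ≤ w y := hGmin k₁ y hy
  -- local minimum helper
  have hlocmin : ∀ x ∈ closure Ω, (∀ y ∈ closure (Metric.ball x r ∩ Ω), w x ≤ w y) →
      IsLocalMinOn w (closure Ω) x := by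
    intro x hx hmin
    have : {y | w x ≤ w y} ∈ nhdsWithin x (closure Ω) := by
      rw [Metric.mem_nhdsWithin_iff]
      exact ⟨r, hr, fun y hy => hmin y (lemA x y hy.2 (Metric.mem_ball.mp hy.1))⟩
    exact this
  -- k₁ ≥ 1
  have hk1 : 1 ≤ k₁ := by
    by_contra h
    push_neg at h
    interval_cases k₁
    · apply hE₁min
      apply hlocmin E₁ hE₁cl
      intro y hy
      calc w E₁ = w (G 0) := rfl
        _ = w (G 1) := hterm'.symm
        _ ≤ w y := hGmin 0 y hy
  have hloc : IsLocalMinOn w (closure Ω) (G k₁) := hlocmin _ (hGcl k₁) hminK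
  have hnotin : G k₁ ∉ Ω := fun hin => hnc (hmp _ hin hloc)
  have hfront : G k₁ ∈ frontier Ω := by
    rw [hΩo.frontier_eq]
    exact ⟨hGcl k₁, hnotin⟩
  have hlt : w (G k₁) < w E₁ := by
    calc w (G k₁) ≤ w (G 1) := hmono hk1
      _ < w (G 0) := hstrict 0 hk1
      _ = w E₁ := rfl
  exact ⟨k₁, G, hk1, hG0, fun i hi => ⟨hGmem i, hGmin i, hstrict i hi⟩, hminK, hfront, hloc, hlt⟩
end
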